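/- arXiv:1601.04840 — 2 statements merged into one kernel-verified Lean document; each statement's English description precedes it below -/
import Mathlib

section
/- The coefficients c_n of the compositional inverse G(X) = Σ c_n X^n of the Prouhet–Thue–Morse series over F_2 satisfy c_0 = 0, c_1 = c_2 = 1, c_3 = 0, and for n ≥ 1: c_{4n} = c_{4n+1} = c_{4n+2} = c_{4n-1} and c_{4n+3} = c_{4n-1} + c_n (in F_2). -/
/-!
Over `𝔽₂` the Thue–Morse series satisfies `F = F(X²) + X (F(X²) + 1/(1 + X²))` and
`F(X²) = F²`, hence `(1 + X)² F = (1 + X)³ F² + X`. Substituting `G` for `X` gives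
`(1 + G)² X = (1 + G)³ X² + G`, and multiplying by `1 + X (1 + G)` turns this into
`(1 + X)(1 + G) = 1 + X³ (1 + G)⁴`. As `(1 + G)⁴ = (1 + G)(X⁴)`, comparing coefficients of
`X^(n+1)` shows that the coefficients `h` of `1 + G` satisfy
`h (n + 1) = h n + [n + 1 ≡ 3 mod 4] h ((n + 1) / 4)`, which unfolds to the recurrence.
-/

open PowerSeries

namespace PowerSeries

instance {R : Type*} [CommRing R] (p : ℕ) [CharP R p] : CharP R⟦X⟧ p :=
  charP_of_injective_algebraMap C_injective p

theorem expand_prime_pow_eq_pow {p : ℕ} [Fact p.Prime] (f : (ZMod p)⟦X⟧) (n : ℕ) :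
    expand (p ^ n) (pow_ne_zero n (Fact.out : p.Prime).ne_zero) f = f ^ p ^ n := by
  have h := MvPowerSeries.map_iterateFrobenius_expand p (Fact.out : p.Prime).ne_zero f n
  rwa [Subsingleton.elim (iterateFrobenius (ZMod p) p n) (RingHom.id _),
    MvPowerSeries.map_id] at h

theorem mk_eq_expand_add_X_mul_expand {R : Type*} [CommRing R] (f : ℕ → R) :
    mk f = expand 2 two_ne_zero (mk fun n => f (2 * n)) +
      X * expand 2 two_ne_zero (mk fun n => f (2 * n + 1)) := by
  ext n
  rcases Nat.even_or_odd' n with ⟨m, rfl | rfl⟩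
  · rcases m with _ | m
    · simp
    · simp [coeff_expand, show 2 * (m + 1) = 2 * m + 1 + 1 by ring]
      congr 1; omega
  · simp [coeff_expand]

theorem coeff_X_pow_mul_expand {R : Type*} [CommRing R] {r k : ℕ} (hk : k ≠ 0) (hr : r < k)
    (f : R⟦X⟧) (n : ℕ) :
    coeff n (X ^ r * expand k hk f) = if n % k = r then coeff (n / k) f else 0 := by
  have hn := Nat.mod_add_div n k
  rw [coeff_X_pow_mul', coeff_expand]
  by_cases h : n % k = r
  · have hsub : n - r = k * (n / k) := by omega
    rw [if_pos (by omega), hsub, if_pos (dvd_mul_right _ _), if_pos h,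
      Nat.mul_div_cancel_left _ (Nat.pos_of_ne_zero hk)]
  · rw [if_neg h]
    split_ifs with hrn hdvd <;> try rfl
    obtain ⟨j, hj⟩ := hdvd
    refine absurd ?_ h
    rw [show n = r + k * j by omega, Nat.add_mul_mod_self_left, Nat.mod_eq_of_lt hr]

theorem coeff_subst_eq_coeff_sum_range {R : Type*} [CommRing R] {G : R⟦X⟧}
    (hG : constantCoeff G = 0) (f : R⟦X⟧) (k : ℕ) :
    coeff k (subst G f) = coeff k (∑ n ∈ Finset.range (k + 1), C (coeff n f) * G ^ n) := by
  rw [coeff_subst' (HasSubst.of_constantCoeff_zero' hG), map_sum]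
  simp only [coeff_C_mul, smul_eq_mul]
  refine finsum_eq_sum_of_support_subset _ fun n hn => ?_
  rw [Finset.coe_range, Set.mem_Iio]
  by_contra! hkn
  have hGn : coeff k (G ^ n) = 0 :=
    X_pow_dvd_iff.mp (pow_dvd_pow_of_dvd (X_dvd_iff.mpr hG) n) k (by omega)
  exact hn (mul_eq_zero_of_right _ hGn)

end PowerSeries

theorem thueMorse_functional_eq {t : ℕ → ZMod 2} (he : ∀ n, t (2 * n) = t n)
    (ho : ∀ n, t (2 * n + 1) = 1 + t n) :
    (1 + X) ^ 2 * mk t = (1 + X) ^ 3 * (mk t) ^ 2 + X := by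
  have hF : mk t = (mk t) ^ 2 + X * (expand 2 two_ne_zero (mk 1) + (mk t) ^ 2) := by
    have h2 : ∀ f : (ZMod 2)⟦X⟧, f ^ 2 = expand 2 two_ne_zero f := fun f => by
      simpa using (expand_prime_pow_eq_pow f 1).symm
    rw [h2, ← map_add]
    conv_lhs => rw [mk_eq_expand_add_X_mul_expand]
    simp only [he, ho]
    rfl
  have hV : (1 - X ^ 2) * expand 2 two_ne_zero (mk 1 : (ZMod 2)⟦X⟧) = 1 := by
    rw [← expand_X 2 two_ne_zero, ← map_one (expand 2 two_ne_zero), ← map_sub, ← map_mul,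
      mul_comm, mk_one_mul_one_sub_eq_one, map_one]
  linear_combination (1 + X) ^ 2 * hF + X * hV +
    (X ^ 2 + X ^ 3) * expand 2 two_ne_zero (mk 1) * CharTwo.two_eq_zero (R := (ZMod 2)⟦X⟧)

theorem one_add_X_mul_one_add_eq_of_subst {R : Type*} [CommRing R] [CharP R 2] {F G : R⟦X⟧}
    (hF : (1 + X) ^ 2 * F = (1 + X) ^ 3 * F ^ 2 + X) (hG0 : constantCoeff G = 0)
    (hFG : subst G F = X) :
    (1 + X) * (1 + G) = 1 + X ^ 3 * (1 + G) ^ 4 := by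
  have hG := HasSubst.of_constantCoeff_zero' hG0
  have h := congrArg (substAlgHom hG) hF
  simp only [map_add, map_mul, map_pow, map_one, substAlgHom_X, coe_substAlgHom, hFG] at h
  linear_combination (1 + X * (1 + G)) * h + G * CharTwo.two_eq_zero (R := R⟦X⟧)

theorem coeff_succ_eq_of_functional_eq {H : (ZMod 2)⟦X⟧}
    (h : (1 + X) * H = 1 + X ^ 3 * H ^ 4) (n : ℕ) :
    coeff (n + 1) H = coeff n H + if (n + 1) % 4 = 3 then coeff ((n + 1) / 4) H else 0 := by
  have h4 : H ^ 4 = expand 4 four_ne_zero H := by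
    simpa using (expand_prime_pow_eq_pow H 2).symm
  have hn := congrArg (coeff (n + 1)) h
  rw [h4, add_mul, one_mul, map_add, coeff_succ_X_mul, map_add, coeff_one, if_neg n.succ_ne_zero,
    coeff_X_pow_mul_expand four_ne_zero (by norm_num)] at hn
  linear_combination hn - coeff n H * CharTwo.two_eq_zero (R := ZMod 2)

theorem coeff_recurrence_of_functional_eq {G : (ZMod 2)⟦X⟧} (hG0 : constantCoeff G = 0)
    (h : (1 + X) * (1 + G) = 1 + X ^ 3 * (1 + G) ^ 4) :
    coeff 1 G = 1 ∧ coeff 2 G = 1 ∧ coeff 3 G = 0 ∧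
    ∀ n : ℕ, 1 ≤ n →
      coeff (4 * n) G = coeff (4 * n - 1) G ∧
      coeff (4 * n + 1) G = coeff (4 * n - 1) G ∧
      coeff (4 * n + 2) G = coeff (4 * n - 1) G ∧
      coeff (4 * n + 3) G = coeff (4 * n - 1) G + coeff n G := by
  have hrec := coeff_succ_eq_of_functional_eq h
  have hH : ∀ n, coeff n (1 + G) = if n = 0 then 1 else coeff n G := fun n => by
    rcases n with _ | n <;> simp [hG0]
  simp only [hH, Nat.add_one_ne_zero, if_false] at hrec
  have c1 : coeff 1 G = 1 := by simpa using hrec 0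
  have c2 : coeff 2 G = 1 := by simpa [c1] using hrec 1
  have c3 : coeff 3 G = 0 := by rw [hrec 2]; simp [c2]; decide
  have hstep : ∀ n, n ≠ 0 → (n + 1) % 4 ≠ 3 → coeff (n + 1) G = coeff n G :=
    fun n h0 h3 => by simp [hrec n, h0, h3]
  have hjump : ∀ n, n ≠ 0 → coeff (4 * n + 3) G = coeff (4 * n + 2) G + coeff n G :=
    fun n h0 => by
      simpa [show (4 * n + 2 + 1) % 4 = 3 by omega, show (4 * n + 2 + 1) / 4 = n by omega, h0]
        using hrec (4 * n + 2)
  refine ⟨c1, c2, c3, fun n hn => ?_⟩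
  have e0 : coeff (4 * n) G = coeff (4 * n - 1) G := by
    simpa [show 4 * n - 1 + 1 = 4 * n by omega] using hstep (4 * n - 1) (by omega) (by omega)
  have e1 : coeff (4 * n + 1) G = coeff (4 * n) G := hstep (4 * n) (by omega) (by omega)
  have e2 : coeff (4 * n + 2) G = coeff (4 * n + 1) G := hstep (4 * n + 1) (by omega) (by omega)
  exact ⟨e0, e1.trans e0, e2.trans (e1.trans e0), by rw [hjump n (by omega), e2, e1, e0]⟩

theorem inverse_ptm_coeff_recurrence_general (t : ℕ → ZMod 2)
    (he : ∀ n, t (2 * n) = t n) (ho : ∀ n, t (2 * n + 1) = 1 + t n)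
    (G : PowerSeries (ZMod 2)) (hG0 : constantCoeff G = 0)
    (hFG : ∀ k : ℕ, coeff k
      (∑ n ∈ Finset.range (k + 1), PowerSeries.C (t n) * G ^ n) =
      coeff k X)
    (c : ℕ → ZMod 2) (hc : ∀ n, c n = coeff n G) :
    c 0 = 0 ∧ c 1 = 1 ∧ c 2 = 1 ∧ c 3 = 0 ∧
    ∀ n : ℕ, 1 ≤ n →
      c (4 * n) = c (4 * n - 1) ∧
      c (4 * n + 1) = c (4 * n - 1) ∧
      c (4 * n + 2) = c (4 * n - 1) ∧
      c (4 * n + 3) = c (4 * n - 1) + c n := by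
  have hsubst : subst G (mk t) = X := ext fun k => by
    simpa [coeff_subst_eq_coeff_sum_range hG0] using hFG k
  have hfun := one_add_X_mul_one_add_eq_of_subst (thueMorse_functional_eq he ho) hG0 hsubst
  simp only [hc]
  exact ⟨by rw [coeff_zero_eq_constantCoeff_apply, hG0],
    coeff_recurrence_of_functional_eq hG0 hfun⟩

/-- The coefficients `cₙ` of the compositional inverse `G` of the
Prouhet–Thue–Morse series over `𝔽₂` satisfy `c₀ = 0`, `c₁ = c₂ = 1`, `c₃ = 0`,
and for `n ≥ 1`: `c_{4n} = c_{4n+1} = c_{4n+2} = c_{4n-1}` and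
`c_{4n+3} = c_{4n-1} + cₙ`. -/
theorem inverse_ptm_coeff_recurrence (t : ℕ → ZMod 2) (h0 : t 0 = 0)
    (he : ∀ n, t (2 * n) = t n) (ho : ∀ n, t (2 * n + 1) = 1 + t n)
    (G : PowerSeries (ZMod 2)) (hG0 : constantCoeff G = 0)
    (hFG : ∀ k : ℕ, coeff k
      (∑ n ∈ Finset.range (k + 1), PowerSeries.C (t n) * G ^ n) =
      coeff k X)
    (hGF : ∀ k : ℕ, coeff k
      (∑ n ∈ Finset.range (k + 1),
        PowerSeries.C (coeff n G) * (PowerSeries.mk t) ^ n) =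
      coeff k X)
    (c : ℕ → ZMod 2) (hc : ∀ n, c n = coeff n G) :
    c 0 = 0 ∧ c 1 = 1 ∧ c 2 = 1 ∧ c 3 = 0 ∧
    ∀ n : ℕ, 1 ≤ n →
      c (4 * n) = c (4 * n - 1) ∧
      c (4 * n + 1) = c (4 * n - 1) ∧
      c (4 * n + 2) = c (4 * n - 1) ∧
      c (4 * n + 3) = c (4 * n - 1) + c n :=
  inverse_ptm_coeff_recurrence_general t he ho G hG0 hFG c hc
end

section
/- Define z_n = ((d_{4n}+1)/4 − n) mod 2, where d_n is the n-th positive integer m with c_m = 0. Then z_n = 1 if and only if n can be written as n = Σ_{i=0}^{s} 2^{n_i − 1}(2^{n_i} − 1) for some strictly increasing sequence of integers 1 < n_0 < n_1 < … < n_s (the empty sum n = 0 included). -/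
/-!
Let `M` be the Moser–de Bruijn sequence (the binary digits of `k` read in base 4). The recursion
for `c` says exactly that, for `m ≥ 1`, `c m = 1` iff `⌈m/2⌉` is a value of `M`; hence the zeros of
`c` in `[1, 2N]` come in pairs filling the gaps between the values of `M` up to `N`. Counting them
gives `d (4n) = 4(n+k)+3`, where `k` is fixed by `2M(k) - k ≤ n < 2M(k+1) - (k+1)`, so
`zₙ ≡ k + 1 (mod 2)`. For even `k` the two bounds differ by one, forcing `n = 2M(k) - k`, and
expanding `k = ∑ 2^i` in binary turns `2M(k) - k` into `∑ 2^i (2^(i+1) - 1)`.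
-/

open Finset

theorem sum_pow_map_add_one (b : ℕ) (s : Finset ℕ) :
    ∑ i ∈ s.map (addRightEmbedding 1), b ^ i = b * ∑ i ∈ s, b ^ i := by
  simp [mul_sum, pow_succ']

theorem count_mem_range_of_strictMono {f : ℕ → ℕ} (hf : StrictMono f)
    [DecidablePred (· ∈ Set.range f)] {K M : ℕ} (hK : f K < M) (hM : M ≤ f (K + 1)) :
    Nat.count (· ∈ Set.range f) M = K + 1 := by
  have : {x ∈ range M | x ∈ Set.range f} = (range (K + 1)).map ⟨f, hf.injective⟩ := by
    ext y
    simp only [mem_filter, mem_range, Set.mem_range, mem_map, Function.Embedding.coeFn_mk]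
    constructor
    · rintro ⟨hy, k, rfl⟩
      exact ⟨k, hf.lt_iff_lt.1 (hy.trans_le hM), rfl⟩
    · rintro ⟨k, hk, rfl⟩
      exact ⟨(hf.monotone (Nat.lt_succ_iff.1 hk)).trans_lt hK, k, rfl⟩
  rw [Nat.count_eq_card_filter_range, this, card_map, card_range]

theorem count_not_half_add_two_mul_count (P : ℕ → Prop) [DecidablePred P] (h0 : P 0) (M : ℕ) :
    Nat.count (fun m => 1 ≤ m ∧ ¬P ((m + 1) / 2)) (2 * M + 1) + 2 * Nat.count P (M + 1) =
      2 * M + 2 := by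
  induction M with
  | zero => simp [Nat.count_succ, h0]
  | succ M ih =>
    rw [show 2 * (M + 1) + 1 = 2 * M + 1 + 1 + 1 by ring, Nat.count_succ, Nat.count_succ,
      Nat.count_succ P (M + 1), show (2 * M + 1 + 1) / 2 = M + 1 by omega,
      show (2 * M + 1 + 1 + 1) / 2 = M + 1 by omega]
    by_cases h : P (M + 1) <;> simp [h] <;> omega

theorem StrictMono.exists_le_and_lt_succ {f : ℕ → ℕ} (hf : StrictMono f) {n : ℕ}
    (hn : f 0 ≤ n) : ∃ k, f k ≤ n ∧ n < f (k + 1) := by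
  classical
  have hex : ∃ k, n < f k := ⟨n + 1, (Nat.lt_succ_self n).trans_le hf.le_apply⟩
  have hpos : Nat.find hex ≠ 0 := fun h => by
    have := Nat.find_spec hex
    rw [h] at this
    omega
  refine ⟨Nat.find hex - 1, not_lt.1 (Nat.find_min hex (by omega)), ?_⟩
  rw [Nat.sub_add_cancel (Nat.one_le_iff_ne_zero.2 hpos)]
  exact Nat.find_spec hex

def moserDeBruijn (k : ℕ) : ℕ := ∑ i ∈ equivBitIndices k, 4 ^ i

@[simp] theorem moserDeBruijn_zero : moserDeBruijn 0 = 0 := by simp [moserDeBruijn]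

theorem moserDeBruijn_sum_two_pow (s : Finset ℕ) :
    moserDeBruijn (∑ i ∈ s, 2 ^ i) = ∑ i ∈ s, 4 ^ i := by
  simp [moserDeBruijn]

theorem moserDeBruijn_strictMono : StrictMono moserDeBruijn :=
  (geomSum_ofColex_strictMono (by norm_num)).comp orderIsoColex.strictMono

theorem moserDeBruijn_two_mul (k : ℕ) : moserDeBruijn (2 * k) = 4 * moserDeBruijn k := by
  obtain ⟨s, rfl⟩ := equivBitIndices.symm.surjective k
  rw [equivBitIndices_symm_apply, ← sum_pow_map_add_one, moserDeBruijn_sum_two_pow,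
    moserDeBruijn_sum_two_pow, sum_pow_map_add_one]

theorem moserDeBruijn_two_mul_add_one (k : ℕ) :
    moserDeBruijn (2 * k + 1) = 4 * moserDeBruijn k + 1 := by
  obtain ⟨s, rfl⟩ := equivBitIndices.symm.surjective k
  have h0 : 0 ∉ s.map (addRightEmbedding 1) := by simp
  have hsum (b : ℕ) : ∑ i ∈ cons 0 _ h0, b ^ i = b * ∑ i ∈ s, b ^ i + 1 := by
    rw [sum_cons, sum_pow_map_add_one, pow_zero, add_comm]
  rw [equivBitIndices_symm_apply, ← hsum, moserDeBruijn_sum_two_pow, hsum,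
    moserDeBruijn_sum_two_pow]

theorem mem_range_moserDeBruijn_iff {y : ℕ} :
    y ∈ Set.range moserDeBruijn ↔ y % 4 ≤ 1 ∧ y / 4 ∈ Set.range moserDeBruijn := by
  constructor
  · rintro ⟨k, rfl⟩
    obtain ⟨a, rfl | rfl⟩ := Nat.even_or_odd' k
    · rw [moserDeBruijn_two_mul]; exact ⟨by omega, a, by omega⟩
    · rw [moserDeBruijn_two_mul_add_one]; exact ⟨by omega, a, by omega⟩
  · rintro ⟨hy, a, ha⟩
    refine ⟨2 * a + y % 4, ?_⟩
    interval_cases h : y % 4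
    · rw [add_zero, moserDeBruijn_two_mul]; omega
    · rw [moserDeBruijn_two_mul_add_one]; omega

theorem two_mul_add_one_mem_range_moserDeBruijn_iff (n : ℕ) :
    2 * n + 1 ∈ Set.range moserDeBruijn ↔ 2 * n ∈ Set.range moserDeBruijn := by
  rw [mem_range_moserDeBruijn_iff, mem_range_moserDeBruijn_iff (y := 2 * n),
    show (2 * n + 1) / 4 = 2 * n / 4 by omega]
  exact and_congr_left fun _ => by omega

open scoped Classical in
theorem ite_two_mul_add_two_mem_range_moserDeBruijn (n : ℕ) :
    (if 2 * n + 2 ∈ Set.range moserDeBruijn then 1 else 0 : ZMod 2) =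
      (if 2 * n ∈ Set.range moserDeBruijn then 1 else 0) +
        (if (n + 1) / 2 ∈ Set.range moserDeBruijn then 1 else 0) := by
  have four_mul_add_two (j : ℕ) : 4 * j + 2 ∉ Set.range moserDeBruijn := fun h => by
    have := (mem_range_moserDeBruijn_iff.1 h).1; omega
  have four_mul (j : ℕ) : 4 * j ∈ Set.range moserDeBruijn ↔ j ∈ Set.range moserDeBruijn := by
    rw [mem_range_moserDeBruijn_iff, show 4 * j / 4 = j by omega]
    exact and_iff_right (by omega)
  obtain ⟨j, rfl | rfl⟩ := Nat.even_or_odd' n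
  · rw [show 2 * (2 * j) + 2 = 4 * j + 2 by ring, show 2 * (2 * j) = 4 * j by ring,
      show (2 * j + 1) / 2 = j by omega, if_neg (four_mul_add_two j), four_mul]
    split_ifs <;> decide
  · rw [show 2 * (2 * j + 1) + 2 = 4 * (j + 1) by ring, show 2 * (2 * j + 1) = 4 * j + 2 by ring,
      show (2 * j + 1 + 1) / 2 = j + 1 by omega, if_neg (four_mul_add_two j), four_mul, zero_add]

open scoped Classical in
theorem eq_ite_mem_range_moserDeBruijn (c : ℕ → ZMod 2) (hc1 : c 1 = 1) (hc2 : c 2 = 1)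
    (hc3 : c 3 = 0)
    (h40 : ∀ n : ℕ, 1 ≤ n → c (4 * n) = c (4 * n - 1))
    (h41 : ∀ n : ℕ, 1 ≤ n → c (4 * n + 1) = c (4 * n - 1))
    (h42 : ∀ n : ℕ, 1 ≤ n → c (4 * n + 2) = c (4 * n - 1))
    (h43 : ∀ n : ℕ, 1 ≤ n → c (4 * n + 3) = c (4 * n - 1) + c n) (m : ℕ) (hm : 1 ≤ m) :
    c m = if (m + 1) / 2 ∈ Set.range moserDeBruijn then 1 else 0 := by
  induction m using Nat.strong_induction_on with
  | _ m ih =>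
  have one_mem : 1 ∈ Set.range moserDeBruijn :=
    ⟨1, by simpa using moserDeBruijn_two_mul_add_one 0⟩
  have two_not_mem : 2 ∉ Set.range moserDeBruijn := fun h => by
    have := (mem_range_moserDeBruijn_iff.1 h).1; omega
  obtain ⟨n, r, hr, rfl⟩ : ∃ n r, r < 4 ∧ m = 4 * n + r :=
    ⟨m / 4, m % 4, by omega, (Nat.div_add_mod m 4).symm⟩
  rcases Nat.eq_zero_or_pos n with rfl | hn
  · interval_cases r
    · omega
    · simp [hc1, one_mem]
    · simp [hc2, one_mem]
    · simp [hc3, two_not_mem]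
  have hprev : c (4 * n - 1) = if 2 * n ∈ Set.range moserDeBruijn then 1 else 0 := by
    rw [ih (4 * n - 1) (by omega) (by omega), show (4 * n - 1 + 1) / 2 = 2 * n by omega]
  interval_cases r
  · rw [add_zero, h40 n hn, hprev, show (4 * n + 1) / 2 = 2 * n by omega]
  · rw [h41 n hn, hprev, show (4 * n + 1 + 1) / 2 = 2 * n + 1 by omega,
      two_mul_add_one_mem_range_moserDeBruijn_iff]
  · rw [h42 n hn, hprev, show (4 * n + 2 + 1) / 2 = 2 * n + 1 by omega,
      two_mul_add_one_mem_range_moserDeBruijn_iff]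
  · rw [h43 n hn, hprev, ih n (by omega) hn, show (4 * n + 3 + 1) / 2 = 2 * n + 2 by omega,
      ite_two_mul_add_two_mem_range_moserDeBruijn]

theorem exists_two_mul_moserDeBruijn_le_and_lt (n : ℕ) :
    ∃ k, 2 * moserDeBruijn k ≤ n + k ∧ n + k + 2 ≤ 2 * moserDeBruijn (k + 1) := by
  have hmono : StrictMono fun j => 2 * moserDeBruijn j - j :=
    strictMono_nat_of_lt_succ fun j => by
      have := moserDeBruijn_strictMono (lt_add_one j)
      have := moserDeBruijn_strictMono.le_apply (x := j)
      omega
  obtain ⟨k, hk, hk'⟩ := hmono.exists_le_and_lt_succ (n := n) (by simp)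
  have := moserDeBruijn_strictMono.le_apply (x := k + 1)
  exact ⟨k, by omega, by omega⟩

theorem even_iff_exists_add_eq_two_mul_moserDeBruijn {n k : ℕ}
    (hk : 2 * moserDeBruijn k ≤ n + k) (hk' : n + k + 2 ≤ 2 * moserDeBruijn (k + 1)) :
    Even k ↔ ∃ j, Even j ∧ n + j = 2 * moserDeBruijn j := by
  constructor
  · rintro ⟨a, rfl⟩
    rw [← two_mul, moserDeBruijn_two_mul] at hk
    rw [← two_mul, moserDeBruijn_two_mul_add_one] at hk'
    exact ⟨2 * a, even_two_mul a, by rw [moserDeBruijn_two_mul]; omega⟩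
  · rintro ⟨j, hj, hn⟩
    have gap {a b : ℕ} (hab : a ≤ b) : moserDeBruijn a + (b - a) ≤ moserDeBruijn b := by
      obtain ⟨c, rfl⟩ := Nat.exists_eq_add_of_le hab
      simpa [add_comm] using moserDeBruijn_strictMono.add_le_nat c a
    rcases lt_trichotomy j k with h | rfl | h
    · have := gap h.le
      omega
    · exact hj
    · have := gap (show k + 1 ≤ j from h)
      omega

theorem sum_two_pow_mul_add_sum_two_pow (T : Finset ℕ) :
    ∑ i ∈ T, 2 ^ i * (2 ^ (i + 1) - 1) + ∑ i ∈ T, 2 ^ i =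
      2 * moserDeBruijn (∑ i ∈ T, 2 ^ i) := by
  rw [moserDeBruijn_sum_two_pow, ← sum_add_distrib, mul_sum]
  refine sum_congr rfl fun i _ => ?_
  have : 1 ≤ 2 ^ (i + 1) := Nat.one_le_two_pow
  rw [show 4 ^ i = 2 ^ i * 2 ^ i by rw [← mul_pow]; rfl]
  zify [this]
  ring

theorem exists_sum_two_pow_pred_mul_iff (n : ℕ) :
    (∃ S : Finset ℕ, (∀ m ∈ S, 1 < m) ∧ n = ∑ m ∈ S, 2 ^ (m - 1) * (2 ^ m - 1)) ↔
      ∃ j, Even j ∧ n + j = 2 * moserDeBruijn j := by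
  constructor
  · rintro ⟨S, hS, rfl⟩
    have hinj : Set.InjOn (· - 1) S := fun a ha b hb h => by
      have := hS a ha; have := hS b hb; simp only at h; omega
    have reindex (g : ℕ → ℕ) : ∑ i ∈ S.image (· - 1), g i = ∑ m ∈ S, g (m - 1) :=
      sum_image hinj
    refine ⟨∑ i ∈ S.image (· - 1), 2 ^ i, ?_, ?_⟩
    · refine even_sum _ fun i hi => (Nat.even_pow' ?_).2 even_two
      obtain ⟨m, hm, rfl⟩ := mem_image.1 hi
      have := hS m hm
      omega
    · rw [← sum_two_pow_mul_add_sum_two_pow, reindex, reindex]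
      congr 1
      refine sum_congr rfl fun m hm => ?_
      rw [Nat.sub_add_cancel (hS m hm).le]
  · rintro ⟨j, ⟨a, rfl⟩, hn⟩
    obtain ⟨T, hT⟩ := equivBitIndices.symm.surjective a
    set U := T.map (addRightEmbedding 1)
    have hU : a + a = ∑ i ∈ U, 2 ^ i := by
      rw [sum_pow_map_add_one, ← hT, equivBitIndices_symm_apply, two_mul]
    refine ⟨U.map (addRightEmbedding 1), by simp [U], ?_⟩
    have := sum_two_pow_mul_add_sum_two_pow U
    rw [hU] at hn
    rw [sum_map]
    simp only [addRightEmbedding_apply, Nat.add_sub_cancel]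
    omega

open scoped Classical in
theorem nth_not_mem_range_moserDeBruijn {n k : ℕ} (hk : 2 * moserDeBruijn k ≤ n + k)
    (hk' : n + k + 2 ≤ 2 * moserDeBruijn (k + 1)) :
    Nat.nth (fun m => 1 ≤ m ∧ (m + 1) / 2 ∉ Set.range moserDeBruijn) (4 * n) =
      4 * (n + k) + 3 := by
  have hcount (M : ℕ) (hM : 2 * (n + k) + 2 ≤ M) (hM' : M ≤ 2 * (n + k) + 3) :
      Nat.count (· ∈ Set.range moserDeBruijn) M = 2 * k + 2 := by
    refine count_mem_range_of_strictMono moserDeBruijn_strictMono ?_ ?_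
    · rw [moserDeBruijn_two_mul_add_one]; omega
    · rw [show 2 * k + 1 + 1 = 2 * (k + 1) by ring, moserDeBruijn_two_mul]; omega
  have hnot : 2 * (n + k) + 2 ∉ Set.range moserDeBruijn :=
    Nat.count_succ_eq_count_iff.1
      ((hcount _ (by omega) le_rfl).trans (hcount _ le_rfl (by omega)).symm)
  have hpairs := count_not_half_add_two_mul_count (· ∈ Set.range moserDeBruijn)
    ⟨0, moserDeBruijn_zero⟩ (2 * (n + k) + 1)
  rw [hcount _ le_rfl (by omega), show 2 * (2 * (n + k) + 1) + 1 = 4 * (n + k) + 3 by ring]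
    at hpairs
  have hzeros : Nat.count (fun m => 1 ≤ m ∧ (m + 1) / 2 ∉ Set.range moserDeBruijn)
      (4 * (n + k) + 3) = 4 * n := by omega
  rw [← hzeros]
  refine Nat.nth_count ⟨by omega, ?_⟩
  rwa [show (4 * (n + k) + 3 + 1) / 2 = 2 * (n + k) + 2 by omega]

theorem z_eq_one_iff_general (c : ℕ → ZMod 2) (hc1 : c 1 = 1) (hc2 : c 2 = 1) (hc3 : c 3 = 0)
    (h40 : ∀ n : ℕ, 1 ≤ n → c (4 * n) = c (4 * n - 1))
    (h41 : ∀ n : ℕ, 1 ≤ n → c (4 * n + 1) = c (4 * n - 1))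
    (h42 : ∀ n : ℕ, 1 ≤ n → c (4 * n + 2) = c (4 * n - 1))
    (h43 : ∀ n : ℕ, 1 ≤ n → c (4 * n + 3) = c (4 * n - 1) + c n)
    (d : ℕ → ℕ) (hd : ∀ n : ℕ, d n = Nat.nth (fun m => 1 ≤ m ∧ c m = 0) n)
    (z : ℕ → ℕ) (hz : ∀ n : ℕ, z n = ((d (4 * n) + 1) / 4 - n) % 2) :
    ∀ n : ℕ, z n = 1 ↔
      ∃ S : Finset ℕ, (∀ m ∈ S, 1 < m) ∧
        n = ∑ m ∈ S, 2 ^ (m - 1) * (2 ^ m - 1) := by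
  intro n
  have hzeros : (fun m => 1 ≤ m ∧ c m = 0) =
      fun m => 1 ≤ m ∧ (m + 1) / 2 ∉ Set.range moserDeBruijn := by
    ext m
    refine and_congr_right fun hm => ?_
    rw [eq_ite_mem_range_moserDeBruijn c hc1 hc2 hc3 h40 h41 h42 h43 m hm]
    split_ifs <;> simp_all
  obtain ⟨k, hk, hk'⟩ := exists_two_mul_moserDeBruijn_le_and_lt n
  have hzk : z n = (k + 1) % 2 := by
    rw [hz, hd, hzeros, nth_not_mem_range_moserDeBruijn hk hk']
    omega
  rw [hzk, exists_sum_two_pow_pred_mul_iff,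
    ← even_iff_exists_add_eq_two_mul_moserDeBruijn hk hk', Nat.even_iff]
  omega

/-- Let `d` enumerate `{m ≥ 1 : c_m = 0}` in increasing order (`d 0` being the
least element) and `zₙ = ((d_{4n} + 1)/4 − n) mod 2`. Then `zₙ = 1` iff
`n = ∑_{m ∈ S} 2^{m−1}(2^m − 1)` for some finite set `S` of integers `> 1`
(the empty sum `n = 0` included). -/
theorem z_eq_one_iff (c : ℕ → ZMod 2) (hc0 : c 0 = 0) (hc1 : c 1 = 1) (hc2 : c 2 = 1) (hc3 : c 3 = 0)
    (h40 : ∀ n : ℕ, 1 ≤ n → c (4 * n) = c (4 * n - 1))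
    (h41 : ∀ n : ℕ, 1 ≤ n → c (4 * n + 1) = c (4 * n - 1))
    (h42 : ∀ n : ℕ, 1 ≤ n → c (4 * n + 2) = c (4 * n - 1))
    (h43 : ∀ n : ℕ, 1 ≤ n → c (4 * n + 3) = c (4 * n - 1) + c n)
    (d : ℕ → ℕ) (hd : ∀ n : ℕ, d n = Nat.nth (fun m => 1 ≤ m ∧ c m = 0) n)
    (z : ℕ → ℕ) (hz : ∀ n : ℕ, z n = ((d (4 * n) + 1) / 4 - n) % 2) :
    ∀ n : ℕ, z n = 1 ↔
      ∃ S : Finset ℕ, (∀ m ∈ S, 1 < m) ∧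
        n = ∑ m ∈ S, 2 ^ (m - 1) * (2 ^ m - 1) :=
  z_eq_one_iff_general c hc1 hc2 hc3 h40 h41 h42 h43 d hd z hz
end
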